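/- There exists a strictly increasing sequence of integers ℓ₁ = 2 < ℓ₂ < ℓ₃ < ⋯ such that for each j ≥ 1, (−1)^j · μ₁(1, ℓⱼ) > 0 and ℓ_{j+1} ≤ 2·ℓⱼ² − 2, where μ₁ is the Möbius function of the floor quotient partial order. Consequently the function n ↦ μ₁(1,n) has infinitely many sign changes. -/

import Mathlib

/-!
Write `f n = μ₁(1, n)` and `Q(n)` for the set of floor quotients of `n`; the recursion says that
`f` sums to zero over `Q(n)` for every `n ≥ 2`, and `f 2 = -1`. For `ℓ ≥ 2` compare `Q(ℓ² - 1)`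
with `Q(2ℓ² - 2)`: the first set is contained in the second, every `v < ℓ` lies in both (since
`v² ≤ ℓ² - 1`), and `ℓ` lies only in the second. So `f` sums to zero over the difference, a subset
of `[ℓ, 2ℓ² - 2]` containing `ℓ`, and some `m ∈ (ℓ, 2ℓ² - 2]` has sign opposite to `f ℓ`.
Iterating from `ℓ₁ = 2` gives the alternating sequence.
-/

/-- `d` is a floor quotient of `n`: `d = ⌊n/k⌋` for some positive integer `k`. -/
def FloorQuotient (d n : ℕ) : Prop := ∃ k : ℕ, 0 < k ∧ d = n / k

open Finset

namespace FloorQuotient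

theorem refl (n : ℕ) : FloorQuotient n n := ⟨1, one_pos, (Nat.div_one n).symm⟩

theorem one_left {n : ℕ} (hn : 0 < n) : FloorQuotient 1 n := ⟨n, hn, (Nat.div_self hn).symm⟩

theorem le {v n : ℕ} (h : FloorQuotient v n) : v ≤ n := by
  obtain ⟨k, -, rfl⟩ := h
  exact Nat.div_le_self n k

theorem two_mul {v n : ℕ} (h : FloorQuotient v n) : FloorQuotient v (2 * n) := by
  obtain ⟨k, hk, rfl⟩ := h
  exact ⟨2 * k, by omega, (Nat.mul_div_mul_left n k two_pos).symm⟩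

end FloorQuotient

/-- Witnessed by `v = ⌊n / ⌊n / v⌋⌋`. -/
theorem floorQuotient_of_mul_self_le {v n : ℕ} (hv : 0 < v) (h : v * v ≤ n) :
    FloorQuotient v n := by
  have hk : v ≤ n / v := (Nat.le_div_iff_mul_le hv).2 h
  have hdiv := Nat.div_add_mod n v
  have hmod := Nat.mod_lt n hv
  refine ⟨n / v, by omega, (Nat.div_eq_of_lt_le (Nat.mul_div_le n v) ?_).symm⟩
  rw [Nat.succ_mul]
  omega

theorem not_floorQuotient_sq_sub_one {ℓ : ℕ} (hℓ : 2 ≤ ℓ) : ¬ FloorQuotient ℓ (ℓ ^ 2 - 1) := by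
  rintro ⟨k, hk, he⟩
  have h1 : ℓ * k ≤ ℓ ^ 2 - 1 := (Nat.le_div_iff_mul_le hk).1 he.le
  have h2 : ℓ ^ 2 - 1 < (ℓ + 1) * k := (Nat.div_lt_iff_lt_mul hk).1 (by omega)
  have hsq : 1 ≤ ℓ ^ 2 := Nat.one_le_pow _ _ (by omega)
  zify [hsq] at h1 h2
  have hkℓ : (k : ℤ) < ℓ := by nlinarith
  nlinarith

open scoped Classical in
noncomputable def floorQuotients (n : ℕ) : Finset ℕ :=
  (Icc 1 n).filter (fun e => FloorQuotient e n)

theorem mem_floorQuotients {v n : ℕ} : v ∈ floorQuotients n ↔ 0 < v ∧ FloorQuotient v n := by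
  simp only [floorQuotients, mem_filter, mem_Icc]
  exact ⟨fun h => ⟨h.1.1, h.2⟩, fun h => ⟨⟨h.1, h.2.le⟩, h.2⟩⟩

open scoped Classical in
theorem filter_floorQuotient_one_Icc (n : ℕ) :
    (Icc 1 n).filter (fun e => FloorQuotient 1 e ∧ FloorQuotient e n) = floorQuotients n := by
  refine filter_congr fun e he => ?_
  exact and_iff_right (FloorQuotient.one_left (mem_Icc.1 he).1)

theorem floorQuotients_two : floorQuotients 2 = {1, 2} := by
  ext v
  simp only [mem_floorQuotients, mem_insert, mem_singleton]
  constructor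
  · rintro ⟨hv, hfq⟩
    have := hfq.le
    omega
  · rintro (rfl | rfl)
    exacts [⟨one_pos, .one_left two_pos⟩, ⟨two_pos, .refl 2⟩]

theorem floorQuotients_subset_two_mul (n : ℕ) : floorQuotients n ⊆ floorQuotients (2 * n) :=
  fun _ hv => mem_floorQuotients.2 <| (mem_floorQuotients.1 hv).imp_right FloorQuotient.two_mul

theorem mem_floorQuotients_sdiff_self {ℓ : ℕ} (hℓ : 2 ≤ ℓ) :
    ℓ ∈ floorQuotients (2 * (ℓ ^ 2 - 1)) \ floorQuotients (ℓ ^ 2 - 1) := by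
  simp only [mem_sdiff, mem_floorQuotients, not_and]
  refine ⟨⟨by omega, floorQuotient_of_mul_self_le (by omega) ?_⟩,
    fun _ => not_floorQuotient_sq_sub_one hℓ⟩
  have : 4 ≤ ℓ * ℓ := Nat.mul_le_mul hℓ hℓ
  rw [← sq] at *
  omega

theorem le_of_mem_floorQuotients_sdiff {ℓ v : ℕ}
    (hv : v ∈ floorQuotients (2 * (ℓ ^ 2 - 1)) \ floorQuotients (ℓ ^ 2 - 1)) : ℓ ≤ v := by
  rw [mem_sdiff, mem_floorQuotients, mem_floorQuotients] at hv
  obtain ⟨⟨hv0, -⟩, hvB⟩ := hv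
  by_contra! hvℓ
  have : v * v < ℓ ^ 2 := by nlinarith
  exact hvB ⟨hv0, floorQuotient_of_mul_self_le hv0 (by omega)⟩

section SignChange

variable {M : Type*} [AddCommGroup M] [LinearOrder M] [IsOrderedAddMonoid M]

theorem exists_neg_of_pos_of_sum_floorQuotients_eq_zero {f : ℕ → M}
    (hf : ∀ n, 2 ≤ n → ∑ e ∈ floorQuotients n, f e = 0) {ℓ : ℕ} (hℓ : 2 ≤ ℓ) (hpos : 0 < f ℓ) :
    ∃ m, ℓ < m ∧ m ≤ 2 * ℓ ^ 2 - 2 ∧ f m < 0 := by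
  by_contra! hcon
  have hsq : 4 ≤ ℓ ^ 2 := by nlinarith
  set D := floorQuotients (2 * (ℓ ^ 2 - 1)) \ floorQuotients (ℓ ^ 2 - 1)
  have hD : ∑ e ∈ D, f e = 0 := by
    rw [sum_sdiff_eq_sub (floorQuotients_subset_two_mul _), hf _ (by omega), hf _ (by omega),
      sub_zero]
  refine hD.not_gt (sum_pos' (fun v hv => ?_) ⟨ℓ, mem_floorQuotients_sdiff_self hℓ, hpos⟩)
  obtain rfl | hlt := (le_of_mem_floorQuotients_sdiff hv).eq_or_lt
  · exact hpos.le
  · have := (mem_floorQuotients.1 (mem_sdiff.1 hv).1).2.le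
    exact hcon v hlt (by omega)

end SignChange

theorem exists_seq_of_forall_exists {α : Type*} (P : ℕ → α → Prop) (R : α → α → Prop) {x₀ : α}
    (h₀ : P 0 x₀) (step : ∀ k x, P k x → ∃ y, P (k + 1) y ∧ R x y) :
    ∃ g : ℕ → α, g 0 = x₀ ∧ ∀ k, P k (g k) ∧ R (g k) (g (k + 1)) := by
  choose next hnext using step
  let g : ∀ k, {x // P k x} :=
    fun k => Nat.rec ⟨x₀, h₀⟩ (fun k x => ⟨next k x.1 x.2, (hnext k x.1 x.2).1⟩) k
  exact ⟨fun k => (g k).1, rfl, fun k => ⟨(g k).2, (hnext k _ (g k).2).2⟩⟩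

theorem mul_neg_of_neg_one_pow_mul_pos {R : Type*} [CommRing R] [LinearOrder R]
    [IsStrictOrderedRing R] {a b : R} {j : ℕ} (ha : 0 < (-1) ^ j * a)
    (hb : 0 < (-1) ^ (j + 1) * b) : a * b < 0 := by
  have hsq : ((-1 : R) ^ j) ^ 2 = 1 := by rw [← pow_mul, pow_mul', neg_one_sq, one_pow]
  have h : (-1) ^ j * a * ((-1) ^ (j + 1) * b) = -(a * b) := by
    linear_combination (-(a * b)) * hsq
  linarith [mul_pos ha hb]

open scoped Classical in
theorem mobius_sign_changes_general (μ₁ : ℕ → ℕ → ℤ)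
    -- defining properties of the Möbius function of the floor quotient order
    (hrefl : ∀ d : ℕ, 0 < d → μ₁ d d = 1)
    (hrec : ∀ d n : ℕ, 0 < d → FloorQuotient d n → d ≠ n →
      ∑ e ∈ (Finset.Icc d n).filter
        (fun e => FloorQuotient d e ∧ FloorQuotient e n), μ₁ d e = 0) :
    ∃ ℓ : ℕ → ℕ, ℓ 1 = 2 ∧
      (∀ j : ℕ, 1 ≤ j → ℓ j < ℓ (j + 1)) ∧
      (∀ j : ℕ, 1 ≤ j → ℓ (j + 1) ≤ 2 * (ℓ j) ^ 2 - 2) ∧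
      (∀ j : ℕ, 1 ≤ j → 0 < (-1 : ℤ) ^ j * μ₁ 1 (ℓ j)) ∧
      -- consequently, `n ↦ μ₁(1,n)` has infinitely many sign changes
      (∀ N : ℕ, ∃ a b : ℕ, N < a ∧ a < b ∧ μ₁ 1 a * μ₁ 1 b < 0) := by
  have hsum (n : ℕ) (hn : 2 ≤ n) : ∑ e ∈ floorQuotients n, μ₁ 1 e = 0 := by
    simpa [filter_floorQuotient_one_Icc] using
      hrec 1 n one_pos (.one_left (by omega)) (by omega)
  have h₂ : μ₁ 1 2 = -1 := by
    have := hsum 2 le_rfl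
    rw [floorQuotients_two, sum_pair (by norm_num), hrefl 1 one_pos] at this
    omega
  have hstep (k x : ℕ) (hx : 2 ≤ x) (hpos : 0 < (-1 : ℤ) ^ (k + 1) * μ₁ 1 x) :
      ∃ y, (2 ≤ y ∧ 0 < (-1 : ℤ) ^ (k + 1 + 1) * μ₁ 1 y) ∧ x < y ∧ y ≤ 2 * x ^ 2 - 2 := by
    obtain ⟨m, hxm, hm, hneg⟩ := exists_neg_of_pos_of_sum_floorQuotients_eq_zero
      (f := fun n => (-1 : ℤ) ^ (k + 1) * μ₁ 1 n) (fun n hn => by simp [← mul_sum, hsum n hn])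
      hx hpos
    exact ⟨m, ⟨by omega, by rw [pow_succ]; linarith⟩, hxm, hm⟩
  obtain ⟨g, hg₀, hg⟩ := exists_seq_of_forall_exists
    (fun k x => 2 ≤ x ∧ 0 < (-1 : ℤ) ^ (k + 1) * μ₁ 1 x) (fun x y => x < y ∧ y ≤ 2 * x ^ 2 - 2)
    (x₀ := 2) ⟨le_rfl, by simp [h₂]⟩ fun k x hx => hstep k x hx.1 hx.2
  have hmono : StrictMono g := strictMono_nat_of_lt_succ fun k => (hg k).2.1
  refine ⟨fun j => g (j - 1), hg₀, fun j hj => ?_, fun j hj => ?_, fun j hj => ?_, fun N => ?_⟩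
  · obtain ⟨k, rfl⟩ := Nat.exists_eq_add_of_le' hj
    exact (hg k).2.1
  · obtain ⟨k, rfl⟩ := Nat.exists_eq_add_of_le' hj
    exact (hg k).2.2
  · obtain ⟨k, rfl⟩ := Nat.exists_eq_add_of_le' hj
    exact (hg k).1.2
  · exact ⟨g (N + 1), g (N + 2), (hmono.id_le (N + 1)).trans_lt' (by simp), hmono (by omega),
      mul_neg_of_neg_one_pow_mul_pos (hg (N + 1)).1.2 (hg (N + 2)).1.2⟩

open scoped Classical in
theorem mobius_sign_changes (μ₁ : ℕ → ℕ → ℤ)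
    -- defining properties of the Möbius function of the floor quotient order
    (hrefl : ∀ d : ℕ, 0 < d → μ₁ d d = 1)
    (hzero : ∀ d n : ℕ, 0 < d → 0 < n → ¬ FloorQuotient d n → μ₁ d n = 0)
    (hrec : ∀ d n : ℕ, 0 < d → FloorQuotient d n → d ≠ n →
      ∑ e ∈ (Finset.Icc d n).filter
        (fun e => FloorQuotient d e ∧ FloorQuotient e n), μ₁ d e = 0) :
    ∃ ℓ : ℕ → ℕ, ℓ 1 = 2 ∧
      (∀ j : ℕ, 1 ≤ j → ℓ j < ℓ (j + 1)) ∧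
      (∀ j : ℕ, 1 ≤ j → ℓ (j + 1) ≤ 2 * (ℓ j) ^ 2 - 2) ∧
      (∀ j : ℕ, 1 ≤ j → 0 < (-1 : ℤ) ^ j * μ₁ 1 (ℓ j)) ∧
      -- consequently, `n ↦ μ₁(1,n)` has infinitely many sign changes
      (∀ N : ℕ, ∃ a b : ℕ, N < a ∧ a < b ∧ μ₁ 1 a * μ₁ 1 b < 0) :=
  mobius_sign_changes_general μ₁ hrefl hrec
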